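/- Let a > 0 and let M = (M₁,M₂,M₃) : ℝ → ℝ³ be a differentiable solution of the system Ṁ₁ = -(1/a)M₂M₃ - (3/2)M₂, Ṁ₂ = a M₁M₃ + (3/2)M₁, Ṁ₃ = (1/a - a)M₁M₂. Then the functions t ↦ M₁(t)² + M₂(t)² + M₃(t)² and t ↦ a M₁(t)² + (1/a)M₂(t)² - 3M₃(t) are constant. -/

import Mathlib

/-!
Along any solution, the time derivatives of `M₁² + M₂² + M₃²` and of
`a M₁² + (1/a) M₂² - 3 M₃` vanish identically: the chain rule turns each into a polynomial in
`M₁, M₂, M₃, a, a⁻¹` that cancels term by term. A function on `ℝ` with zero derivative everywhere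
is constant.
-/

theorem is_const_of_hasDerivAt_zero {𝕜 G : Type*} [RCLike 𝕜] [NormedAddCommGroup G]
    [NormedSpace 𝕜 G] {f : 𝕜 → G} (hf : ∀ x, HasDerivAt f 0 x) (x y : 𝕜) : f x = f y :=
  is_const_of_deriv_eq_zero (fun z => (hf z).differentiableAt) (fun z => (hf z).deriv) x y

namespace LiePoissonSU2

variable {a t : ℝ} {M₁ M₂ M₃ : ℝ → ℝ}

theorem hasDerivAt_casimir
    (h₁ : HasDerivAt M₁ (-(1 / a) * M₂ t * M₃ t - 3 / 2 * M₂ t) t)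
    (h₂ : HasDerivAt M₂ (a * M₁ t * M₃ t + 3 / 2 * M₁ t) t)
    (h₃ : HasDerivAt M₃ ((1 / a - a) * M₁ t * M₂ t) t) :
    HasDerivAt (fun t => M₁ t ^ 2 + M₂ t ^ 2 + M₃ t ^ 2) 0 t :=
  (((h₁.pow 2).add (h₂.pow 2)).add (h₃.pow 2)).congr_deriv (by ring)

theorem hasDerivAt_hamiltonian
    (h₁ : HasDerivAt M₁ (-(1 / a) * M₂ t * M₃ t - 3 / 2 * M₂ t) t)
    (h₂ : HasDerivAt M₂ (a * M₁ t * M₃ t + 3 / 2 * M₁ t) t)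
    (h₃ : HasDerivAt M₃ ((1 / a - a) * M₁ t * M₂ t) t) :
    HasDerivAt (fun t => a * M₁ t ^ 2 + (1 / a) * M₂ t ^ 2 - 3 * M₃ t) 0 t :=
  ((((h₁.pow 2).const_mul a).add ((h₂.pow 2).const_mul (1 / a))).sub
    (h₃.const_mul 3)).congr_deriv (by ring)

end LiePoissonSU2

theorem stmt_0 (a : ℝ) (M₁ M₂ M₃ : ℝ → ℝ)
    (h₁ : ∀ t, HasDerivAt M₁ (-(1 / a) * M₂ t * M₃ t - 3 / 2 * M₂ t) t)
    (h₂ : ∀ t, HasDerivAt M₂ (a * M₁ t * M₃ t + 3 / 2 * M₁ t) t)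
    (h₃ : ∀ t, HasDerivAt M₃ ((1 / a - a) * M₁ t * M₂ t) t) :
    (∀ t : ℝ, M₁ t ^ 2 + M₂ t ^ 2 + M₃ t ^ 2 = M₁ 0 ^ 2 + M₂ 0 ^ 2 + M₃ 0 ^ 2) ∧
    (∀ t : ℝ, a * M₁ t ^ 2 + (1 / a) * M₂ t ^ 2 - 3 * M₃ t
      = a * M₁ 0 ^ 2 + (1 / a) * M₂ 0 ^ 2 - 3 * M₃ 0) :=
  ⟨fun t => is_const_of_hasDerivAt_zero
      (fun s => LiePoissonSU2.hasDerivAt_casimir (h₁ s) (h₂ s) (h₃ s)) t 0,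
    fun t => is_const_of_hasDerivAt_zero
      (fun s => LiePoissonSU2.hasDerivAt_hamiltonian (h₁ s) (h₂ s) (h₃ s)) t 0⟩
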